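/- (Stronger ternary descent certificate) Under the same assumptions (F = f + Σ_v g_v + graph total variation, f differentiable, g_v directionally differentiable, w ≥ 0), if F admits a strict descent direction at x ∈ dom F, then F admits a strict descent direction in {−1,0}^V ∪ {0,+1}^V; i.e., there is a strict descent direction of the form s·1_U for some subset U ⊆ V and s ∈ {−1, +1}. -/

import Mathlib

/-!
The directional derivative `Φ = F'(x, ·)` exists in every direction and has an explicit formula,
which shows that it is positively homogeneous and additive on comonotone pairs of directions, like
a Lovász extension. Since `d = max d 0 + min d 0` is such a pair, `Φ d < 0` forces `Φ` to be
negative at the positive or at the negative part of `d`. A nonnegative direction `e` splits as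
`e = m • 1_U + e'` with `U = {e > 0}`, `m = min_U e`, and `e' ≥ 0` comonotone to `1_U` and
supported in `U` minus a point, so `Φ e = m Φ(1_U) + Φ e'`; by induction on the support, `Φ` is
negative at the indicator of one of the upper level sets of `e`.
-/

open Filter Set Finset

def HasDirDeriv {Ω : Type*} [AddCommGroup Ω] [Module ℝ Ω]
    (h : Ω → EReal) (x d : Ω) (L : EReal) : Prop :=
  Tendsto (fun t : ℝ => ((t⁻¹ : ℝ) : EReal) * (h (x + t • d) - h x))
    (nhdsWithin 0 (Set.Ioi 0)) (nhds L)

variable {V : Type*} [Fintype V] [DecidableEq V]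

/-- The objective `F = f + Σ_v g_v + graph total variation`. -/
noncomputable def objF (E : Finset (V × V)) (w : V × V → ℝ)
    (f : (V → ℝ) → ℝ) (g : V → ℝ → EReal) (x : V → ℝ) : EReal :=
  ((f x : ℝ) : EReal) + ∑ v, g v (x v) +
    ((∑ e ∈ E, w e * |x e.1 - x e.2| : ℝ) : EReal)

/-- `δ⁺_v(x) = ∇_v f(x) + g_v'(x_v, +1) + Σ_{e ∋ v} w_e sign(x_v − x_u)`. -/
noncomputable def deltaPlus (E : Finset (V × V)) (w : V × V → ℝ)
    (f : (V → ℝ) → ℝ) (gd : V → ℝ → ℝ → EReal) (x : V → ℝ) (v : V) : EReal :=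
  ((fderiv ℝ f x (Pi.single v 1) : ℝ) : EReal) + gd v (x v) 1 +
    ((∑ e ∈ E.filter (fun e => e.1 = v ∨ e.2 = v),
        w e * Real.sign (x v - x (if e.1 = v then e.2 else e.1)) : ℝ) : EReal)

/-- `δ⁻_v(x) = ∇_v f(x) − g_v'(x_v, −1) + Σ_{e ∋ v} w_e sign(x_v − x_u)`. -/
noncomputable def deltaMinus (E : Finset (V × V)) (w : V × V → ℝ)
    (f : (V → ℝ) → ℝ) (gd : V → ℝ → ℝ → EReal) (x : V → ℝ) (v : V) : EReal :=
  ((fderiv ℝ f x (Pi.single v 1) : ℝ) : EReal) - gd v (x v) (-1) +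
    ((∑ e ∈ E.filter (fun e => e.1 = v ∨ e.2 = v),
        w e * Real.sign (x v - x (if e.1 = v then e.2 else e.1)) : ℝ) : EReal)

/-- The value of the directional derivative of `F` at `x` in direction `d`. -/
noncomputable def dirDerivVal (E : Finset (V × V)) (w : V × V → ℝ)
    (f : (V → ℝ) → ℝ) (gd : V → ℝ → ℝ → EReal) (x d : V → ℝ) : EReal :=
  (∑ v ∈ univ.filter (fun v => 0 < d v),
      ((d v : ℝ) : EReal) * deltaPlus E w f gd x v) +
  (∑ v ∈ univ.filter (fun v => d v < 0),
      ((d v : ℝ) : EReal) * deltaMinus E w f gd x v) +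
  ((∑ e ∈ E.filter (fun e => x e.1 = x e.2), w e * |d e.1 - d e.2| : ℝ) : EReal)

open Topology

namespace EReal

theorem sum_ne_bot {κ : Type*} {s : Finset κ} {a : κ → EReal} (h : ∀ i ∈ s, a i ≠ ⊥) :
    ∑ i ∈ s, a i ≠ ⊥ := by
  induction s using Finset.cons_induction with
  | empty => simp
  | cons i s hi ih =>
    rw [sum_cons]
    exact add_ne_bot_iff.2 ⟨h i (mem_cons_self i s), ih fun j hj => h j (mem_cons_of_mem hj)⟩

theorem sum_ne_top {κ : Type*} {s : Finset κ} {a : κ → EReal} (h : ∀ i ∈ s, a i ≠ ⊤) :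
    ∑ i ∈ s, a i ≠ ⊤ := by
  induction s using Finset.cons_induction with
  | empty => simp
  | cons i s hi ih =>
    rw [sum_cons]
    exact add_ne_top (h i (mem_cons_self i s)) (ih fun j hj => h j (mem_cons_of_mem hj))

theorem ne_top_of_sum_ne_top {κ : Type*} [DecidableEq κ] {s : Finset κ} {a : κ → EReal}
    (hbot : ∀ i ∈ s, a i ≠ ⊥) (h : ∑ i ∈ s, a i ≠ ⊤) {i : κ} (hi : i ∈ s) : a i ≠ ⊤ := by
  rw [← add_sum_erase s a hi] at h
  exact ((add_ne_top_iff_ne_top₂ (hbot i hi)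
    (sum_ne_bot fun j hj => hbot j (mem_of_mem_erase hj))).1 h).1

theorem lt_zero_of_coe_mul_lt_zero {c : ℝ} {a : EReal} (hc : 0 < c) (h : (c : EReal) * a < 0) :
    a < 0 := by
  rcases mul_neg_iff.1 h with ⟨_, ha⟩ | ⟨hc', _⟩
  · exact ha
  · exact absurd hc' (EReal.coe_pos.2 hc).not_gt

theorem lt_zero_or_lt_zero_of_add_lt_zero {a b : EReal} (h : a + b < 0) : a < 0 ∨ b < 0 := by
  by_contra! hab
  exact (add_nonneg hab.1 hab.2).not_gt h

end EReal

theorem Real.sameRay_of_mul_nonneg {a b : ℝ} (h : 0 ≤ a * b) : SameRay ℝ a b := by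
  simpa using sameRay_smul_smul_of_mul_nonneg (v := (1 : ℝ)) h

section DirDeriv

variable {Ω : Type*} [AddCommGroup Ω] [Module ℝ Ω] {φ ψ : Ω → EReal} {x d : Ω} {L M : EReal}

theorem HasDirDeriv.unique (h₁ : HasDirDeriv φ x d L) (h₂ : HasDirDeriv φ x d M) : L = M :=
  tendsto_nhds_unique h₁ h₂

theorem hasDirDeriv_zero_dir (hbot : φ x ≠ ⊥) (htop : φ x ≠ ⊤) : HasDirDeriv φ x 0 0 := by
  simp [HasDirDeriv, EReal.sub_self htop hbot]

theorem hasDirDeriv_coe {φ : Ω → ℝ} {L : ℝ}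
    (h : HasDerivWithinAt (fun t : ℝ => φ (x + t • d)) L (Ioi 0) 0) :
    HasDirDeriv (fun y => (φ y : EReal)) x d L := by
  refine (EReal.tendsto_coe.2 ((hasDerivWithinAt_iff_tendsto_slope' (lt_irrefl 0)).1 h)).congr
    fun t => ?_
  simp [slope, EReal.coe_mul, EReal.coe_sub]

theorem HasDirDeriv.smul_dir (h : HasDirDeriv φ x d L) {c : ℝ} (hc : 0 < c) :
    HasDirDeriv φ x (c • d) (c * L) := by
  have hscale : Tendsto (fun t : ℝ => c * t) (𝓝[>] 0) (𝓝[>] 0) :=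
    tendsto_nhdsWithin_of_tendsto_nhds_of_eventually_within _
      (((continuous_const_mul c).tendsto' 0 0 (mul_zero c)).mono_left nhdsWithin_le_nhds)
      (eventually_nhdsWithin_of_forall fun t (ht : 0 < t) => mul_pos hc ht)
  refine (EReal.Tendsto.const_mul (h.comp hscale) (Or.inl (EReal.coe_ne_bot c))
    (Or.inl (EReal.coe_ne_top c))).congr fun t => ?_
  rw [Function.comp_apply, ← mul_assoc, ← EReal.coe_mul, mul_inv, ← mul_assoc,
    mul_inv_cancel₀ hc.ne', one_mul, smul_smul, mul_comm c t]

theorem HasDirDeriv.add (hφ : HasDirDeriv φ x d L) (hψ : HasDirDeriv ψ x d M)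
    (hφbot : φ x ≠ ⊥) (hφtop : φ x ≠ ⊤) (hψbot : ψ x ≠ ⊥) (hψtop : ψ x ≠ ⊤)
    (hL : L ≠ ⊥) (hM : M ≠ ⊥) :
    HasDirDeriv (fun y => φ y + ψ y) x d (L + M) := by
  refine ((EReal.continuousAt_add (p := (L, M)) (Or.inr hM) (Or.inl hL)).tendsto.comp
    (hφ.prodMk_nhds hψ)).congr' ?_
  filter_upwards [self_mem_nhdsWithin] with t (ht : 0 < t)
  lift φ x to ℝ using ⟨hφtop, hφbot⟩ with a
  lift ψ x to ℝ using ⟨hψtop, hψbot⟩ with b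
  rw [Function.comp_apply, ← EReal.left_distrib_of_nonneg_of_ne_top
    (EReal.coe_nonneg.2 (inv_nonneg.2 ht.le)) (EReal.coe_ne_top _), sub_eq_add_neg,
    sub_eq_add_neg, sub_eq_add_neg, ← EReal.coe_add, ← EReal.coe_neg, ← EReal.coe_neg,
    ← EReal.coe_neg, neg_add, EReal.coe_add, add_add_add_comm]

theorem HasDirDeriv.sum {κ : Type*} {s : Finset κ} {φ : κ → Ω → EReal} {L : κ → EReal}
    (h : ∀ i ∈ s, HasDirDeriv (φ i) x d (L i)) (hbot : ∀ i ∈ s, φ i x ≠ ⊥)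
    (htop : ∀ i ∈ s, φ i x ≠ ⊤) (hL : ∀ i ∈ s, L i ≠ ⊥) :
    HasDirDeriv (fun y => ∑ i ∈ s, φ i y) x d (∑ i ∈ s, L i) := by
  induction s using Finset.cons_induction with
  | empty => simp [HasDirDeriv]
  | cons i s hi ih =>
    have hs {P : κ → Prop} (hP : ∀ j ∈ cons i s hi, P j) : ∀ j ∈ s, P j :=
      fun j hj => hP j (mem_cons_of_mem hj)
    have hi' : i ∈ cons i s hi := mem_cons_self i s
    simp only [sum_cons]
    exact (h i hi').add (ih (hs h) (hs hbot) (hs htop) (hs hL)) (hbot i hi') (htop i hi')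
      (EReal.sum_ne_bot (hs hbot)) (EReal.sum_ne_top (hs htop)) (hL i hi')
      (EReal.sum_ne_bot (hs hL))

end DirDeriv

section Homogeneous

variable {Ω : Type*} [AddCommGroup Ω] [Module ℝ Ω]

def PositivelyHomogeneous (Φ : Ω → EReal) : Prop :=
  ∀ c : ℝ, 0 < c → ∀ u, Φ (c • u) = c * Φ u

theorem positivelyHomogeneous_of_hasDirDeriv {φ : Ω → EReal} {x : Ω} {D : Ω → EReal}
    (h : ∀ d, HasDirDeriv φ x d (D d)) : PositivelyHomogeneous D :=
  fun _ hc u => (h _).unique ((h u).smul_dir hc)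

theorem positivelyHomogeneous_coe {φ : Ω → ℝ} (h : ∀ c : ℝ, 0 < c → ∀ u, φ (c • u) = c * φ u) :
    PositivelyHomogeneous fun u => (φ u : EReal) :=
  fun c hc u => by dsimp only; rw [h c hc u, EReal.coe_mul]

theorem PositivelyHomogeneous.add {Φ Ψ : Ω → EReal} (hΦ : PositivelyHomogeneous Φ)
    (hΨ : PositivelyHomogeneous Ψ) : PositivelyHomogeneous fun u => Φ u + Ψ u :=
  fun c hc u => by
    dsimp only
    rw [hΦ c hc, hΨ c hc, EReal.left_distrib_of_nonneg_of_ne_top (EReal.coe_nonneg.2 hc.le)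
      (EReal.coe_ne_top c)]

theorem PositivelyHomogeneous.sum {κ : Type*} (s : Finset κ) {Φ : κ → Ω → EReal}
    (h : ∀ i ∈ s, PositivelyHomogeneous (Φ i)) :
    PositivelyHomogeneous fun u => ∑ i ∈ s, Φ i u := by
  induction s using Finset.cons_induction with
  | empty => simp [PositivelyHomogeneous]
  | cons i s hi ih =>
    simp only [sum_cons]
    exact (h i (mem_cons_self i s)).add (ih fun j hj => h j (mem_cons_of_mem hj))

theorem PositivelyHomogeneous.comp_neg {Φ : Ω → EReal} (hΦ : PositivelyHomogeneous Φ) :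
    PositivelyHomogeneous fun u => Φ (-u) :=
  fun c hc u => by dsimp only; rw [← smul_neg, hΦ c hc]

theorem PositivelyHomogeneous.map_add_of_sameRay {Φ : Ω → EReal}
    (hΦ : PositivelyHomogeneous Φ) (h₀ : Φ 0 = 0) {u v : Ω} (h : SameRay ℝ u v) :
    Φ (u + v) = Φ u + Φ v := by
  rcases h with rfl | rfl | ⟨r₁, r₂, hr₁, hr₂, h⟩
  · simp [h₀]
  · simp [h₀]
  · have hv : v = (r₁ / r₂) • u := by
      rw [div_eq_mul_inv, mul_comm, mul_smul, h, inv_smul_smul₀ hr₂.ne']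
    have huv : u + v = (1 + r₁ / r₂) • u := by rw [hv, add_smul, one_smul]
    have hr : 0 < r₁ / r₂ := div_pos hr₁ hr₂
    rw [huv, hv, hΦ _ (by positivity), hΦ _ hr, EReal.coe_add, EReal.coe_one,
      EReal.right_distrib_of_nonneg zero_le_one (EReal.coe_nonneg.2 hr.le), one_mul]

end Homogeneous

section Comonotone

variable {ι : Type*}

/-- Comonotone on `ι` extended by a point where both functions vanish. -/
def Comonotone (u v : ι → ℝ) : Prop :=
  (∀ a, SameRay ℝ (u a) (v a)) ∧ ∀ a b, SameRay ℝ (u a - u b) (v a - v b)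

theorem Comonotone.neg {u v : ι → ℝ} (h : Comonotone u v) : Comonotone (-u) (-v) :=
  ⟨fun a => sameRay_neg_iff.2 (h.1 a), fun a b => by
    simpa only [Pi.neg_apply, neg_sub_neg] using h.2 b a⟩

theorem comonotone_max_min (d : ι → ℝ) :
    Comonotone (fun a => max (d a) 0) (fun a => min (d a) 0) := by
  refine ⟨fun a => Real.sameRay_of_mul_nonneg ?_, fun a b => Real.sameRay_of_mul_nonneg ?_⟩
  · rcases le_total (d a) 0 with h | h <;> simp [h]
  · rcases le_total (d a) (d b) with h | h
    · exact mul_nonneg_of_nonpos_of_nonpos (sub_nonpos.2 (max_le_max_right 0 h))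
        (sub_nonpos.2 (min_le_min_right 0 h))
    · exact mul_nonneg (sub_nonneg.2 (max_le_max_right 0 h)) (sub_nonneg.2 (min_le_min_right 0 h))

theorem comonotone_smul_indicator {S : Set ι} {m : ℝ} {e : ι → ℝ} (hm : 0 ≤ m) (he : 0 ≤ e)
    (heS : ∀ a ∉ S, e a = 0) : Comonotone (m • S.indicator 1) e := by
  refine ⟨fun a => Real.sameRay_of_mul_nonneg ?_, fun a b => Real.sameRay_of_mul_nonneg ?_⟩
  · by_cases ha : a ∈ S <;> simp [ha, mul_nonneg hm (he a)]
  · by_cases ha : a ∈ S <;> by_cases hb : b ∈ S <;>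
      simp [ha, hb, heS, mul_nonneg hm (he a), mul_nonneg hm (he b)]

def ComonotoneAdditive (Φ : (ι → ℝ) → EReal) : Prop :=
  ∀ u v, Comonotone u v → Φ (u + v) = Φ u + Φ v

theorem comonotoneAdditive_coe {φ : (ι → ℝ) → ℝ}
    (h : ∀ u v, Comonotone u v → φ (u + v) = φ u + φ v) :
    ComonotoneAdditive fun u => (φ u : EReal) :=
  fun u v huv => by dsimp only; rw [h u v huv, EReal.coe_add]

theorem ComonotoneAdditive.add {Φ Ψ : (ι → ℝ) → EReal} (hΦ : ComonotoneAdditive Φ)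
    (hΨ : ComonotoneAdditive Ψ) : ComonotoneAdditive fun u => Φ u + Ψ u :=
  fun u v huv => by dsimp only; rw [hΦ u v huv, hΨ u v huv, add_add_add_comm]

theorem ComonotoneAdditive.sum {κ : Type*} (s : Finset κ) {Φ : κ → (ι → ℝ) → EReal}
    (h : ∀ i ∈ s, ComonotoneAdditive (Φ i)) :
    ComonotoneAdditive fun u => ∑ i ∈ s, Φ i u := by
  induction s using Finset.cons_induction with
  | empty => simp [ComonotoneAdditive]
  | cons i s hi ih =>
    simp only [sum_cons]
    exact (h i (mem_cons_self i s)).add (ih fun j hj => h j (mem_cons_of_mem hj))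

theorem ComonotoneAdditive.comp_neg {Φ : (ι → ℝ) → EReal} (hΦ : ComonotoneAdditive Φ) :
    ComonotoneAdditive fun u => Φ (-u) :=
  fun u v huv => by dsimp only; rw [neg_add, hΦ _ _ huv.neg]

theorem exists_eq_smul_indicator_add [Fintype ι] {e : ι → ℝ} (he : 0 ≤ e) (hpos : ∃ a, 0 < e a) :
    ∃ U : Set ι, ∃ m : ℝ, 0 < m ∧ ∃ e' : ι → ℝ, 0 ≤ e' ∧ Comonotone (m • U.indicator 1) e' ∧
      e = m • U.indicator 1 + e' ∧ #{a | 0 < e' a} < #{a | 0 < e a} := by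
  classical
  set S : Finset ι := {a | 0 < e a}
  have heS : ∀ a ∉ S, e a = 0 := fun a ha =>
    le_antisymm (not_lt.1 fun h => ha (mem_filter.2 ⟨mem_univ a, h⟩)) (he a)
  obtain ⟨a₀, ha₀, hmin⟩ := S.exists_min_image e (by simpa [S, Finset.Nonempty] using hpos)
  have hm : 0 < e a₀ := (mem_filter.1 ha₀).2
  set e' := e - e a₀ • (S : Set ι).indicator 1
  have he' : 0 ≤ e' := fun a => by
    by_cases ha : a ∈ S
    · simpa [e', ha] using hmin a ha
    · simp [e', ha, heS a ha]
  have he'S : ∀ a ∉ S.erase a₀, e' a = 0 := fun a ha => by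
    by_cases haS : a ∈ S
    · obtain rfl : a = a₀ := by simpa [haS] using ha
      simp [e', haS]
    · simp [e', haS, heS a haS]
  refine ⟨S, e a₀, hm, e', he', comonotone_smul_indicator hm.le he' fun a ha => he'S a
    fun h => ha (mem_of_mem_erase h), (add_sub_cancel _ _).symm, ?_⟩
  calc #{a | 0 < e' a} ≤ #(S.erase a₀) :=
        card_le_card fun a ha => by_contra fun h => by simp [he'S a h] at ha
    _ < #S := card_erase_lt_of_mem ha₀

theorem exists_indicator_lt_zero [Fintype ι] {Φ : (ι → ℝ) → EReal}
    (hhom : PositivelyHomogeneous Φ) (hadd : ComonotoneAdditive Φ) {e : ι → ℝ} (he : 0 ≤ e)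
    (h : Φ e < 0) : ∃ U : Set ι, Φ (U.indicator 1) < 0 := by
  induction hn : #{a | 0 < e a} using Nat.strong_induction_on generalizing e with
  | _ n ih =>
    by_cases hpos : ∃ a, 0 < e a
    · obtain ⟨U, m, hm, e', he', hcomon, rfl, hcard⟩ := exists_eq_smul_indicator_add he hpos
      rw [hadd _ _ hcomon, hhom m hm] at h
      rcases EReal.lt_zero_or_lt_zero_of_add_lt_zero h with h₁ | h₂
      · exact ⟨U, EReal.lt_zero_of_coe_mul_lt_zero hm h₁⟩
      · exact ih _ (hn ▸ hcard) he' h₂ rfl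
    · simp only [not_exists, not_lt] at hpos
      refine ⟨∅, ?_⟩
      convert h
      ext a
      simp [le_antisymm (hpos a) (he a)]

end Comonotone

noncomputable def absDirDeriv (a b : ℝ) : ℝ :=
  if a = 0 then |b| else SignType.sign a * b

theorem hasDerivWithinAt_abs_add_mul (a b : ℝ) :
    HasDerivWithinAt (fun t => |a + t * b|) (absDirDeriv a b) (Ioi 0) 0 := by
  unfold absDirDeriv
  split_ifs with ha
  · subst ha
    exact (hasDerivAt_mul_const |b|).hasDerivWithinAt.congr
      (fun t (ht : 0 < t) => by rw [zero_add, abs_mul, abs_of_pos ht]) (by simp)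
  · have hlin : HasDerivAt (fun t => a + t * b) b 0 := by
      simpa using ((hasDerivAt_id 0).mul_const b).const_add a
    exact (HasDerivAt.comp_of_eq 0 (hasDerivAt_abs ha) hlin (by simp)).hasDerivWithinAt

theorem absDirDeriv_mul (a : ℝ) {c : ℝ} (hc : 0 < c) (b : ℝ) :
    absDirDeriv a (c * b) = c * absDirDeriv a b := by
  unfold absDirDeriv
  split_ifs
  · rw [abs_mul, abs_of_pos hc]
  · ring

theorem absDirDeriv_add (a : ℝ) {b₁ b₂ : ℝ} (h : SameRay ℝ b₁ b₂) :
    absDirDeriv a (b₁ + b₂) = absDirDeriv a b₁ + absDirDeriv a b₂ := by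
  unfold absDirDeriv
  split_ifs
  · exact h.norm_add
  · ring

section TotalVariation

variable {ι : Type*} (E : Finset (ι × ι)) (w : ι × ι → ℝ) (x : ι → ℝ)

noncomputable def tvDirDeriv (d : ι → ℝ) : ℝ :=
  ∑ e ∈ E, w e * absDirDeriv (x e.1 - x e.2) (d e.1 - d e.2)

theorem hasDerivWithinAt_tv (d : ι → ℝ) :
    HasDerivWithinAt (fun t : ℝ => ∑ e ∈ E, w e * |(x + t • d) e.1 - (x + t • d) e.2|)
      (tvDirDeriv E w x d) (Ioi 0) 0 := by
  have hline (t : ℝ) (a b : ι) : (x + t • d) a - (x + t • d) b = x a - x b + t * (d a - d b) := by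
    simp only [Pi.add_apply, Pi.smul_apply, smul_eq_mul]
    ring
  simp only [hline]
  exact HasDerivWithinAt.fun_sum fun e _ => (hasDerivWithinAt_abs_add_mul _ _).const_mul (w e)

theorem tvDirDeriv_smul {c : ℝ} (hc : 0 < c) (d : ι → ℝ) :
    tvDirDeriv E w x (c • d) = c * tvDirDeriv E w x d := by
  simp only [tvDirDeriv, Pi.smul_apply, smul_eq_mul, ← mul_sub, absDirDeriv_mul _ hc, mul_sum]
  exact sum_congr rfl fun e _ => mul_left_comm _ _ _

theorem tvDirDeriv_add {u v : ι → ℝ} (h : Comonotone u v) :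
    tvDirDeriv E w x (u + v) = tvDirDeriv E w x u + tvDirDeriv E w x v := by
  rw [tvDirDeriv, tvDirDeriv, tvDirDeriv, ← sum_add_distrib]
  refine sum_congr rfl fun e _ => ?_
  rw [Pi.add_apply, Pi.add_apply, add_sub_add_comm, absDirDeriv_add _ (h.2 _ _), mul_add]

end TotalVariation

section Objective

variable {ι : Type*} [Fintype ι] (E : Finset (ι × ι)) (w : ι × ι → ℝ) (f : (ι → ℝ) → ℝ)
  (g : ι → ℝ → EReal) (gd : ι → ℝ → ℝ → EReal) (x : ι → ℝ)

noncomputable def objDirDeriv (d : ι → ℝ) : EReal :=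
  (fderiv ℝ f x d : EReal) + ∑ v, gd v (x v) (d v) + (tvDirDeriv E w x d : EReal)

variable {E w f g gd x}

theorem ne_top_of_objF_ne_top [DecidableEq ι] (hgbot : ∀ v, g v (x v) ≠ ⊥)
    (hx : objF E w f g x ≠ ⊤) (v : ι) : g v (x v) ≠ ⊤ := by
  have hsum := EReal.sum_ne_bot fun v (_ : v ∈ Finset.univ) => hgbot v
  have h₁ := ((EReal.add_ne_top_iff_ne_top₂
    (EReal.add_ne_bot_iff.2 ⟨EReal.coe_ne_bot _, hsum⟩) (EReal.coe_ne_bot _)).1 hx).1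
  have h₂ := ((EReal.add_ne_top_iff_ne_top₂ (EReal.coe_ne_bot _) hsum).1 h₁).2
  exact EReal.ne_top_of_sum_ne_top (fun v _ => hgbot v) h₂ (mem_univ v)

theorem hasDirDeriv_objF (hf : DifferentiableAt ℝ f x) (hgbot : ∀ v, g v (x v) ≠ ⊥)
    (hgtop : ∀ v, g v (x v) ≠ ⊤) (hgd : ∀ v dir, HasDirDeriv (g v) (x v) dir (gd v (x v) dir))
    (hgdbot : ∀ v dir, gd v (x v) dir ≠ ⊥) (d : ι → ℝ) :
    HasDirDeriv (objF E w f g) x d (objDirDeriv E w f gd x d) := by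
  have hGbot : ∑ v, g v (x v) ≠ ⊥ := EReal.sum_ne_bot fun v _ => hgbot v
  have hGtop : ∑ v, g v (x v) ≠ ⊤ := EReal.sum_ne_top fun v _ => hgtop v
  have hDbot : ∑ v, gd v (x v) (d v) ≠ ⊥ := EReal.sum_ne_bot fun v _ => hgdbot v (d v)
  have hF := hasDirDeriv_coe (hf.hasFDerivAt.hasLineDerivAt d).hasDerivWithinAt
  have hG : HasDirDeriv (fun y => ∑ v, g v (y v)) x d (∑ v, gd v (x v) (d v)) :=
    HasDirDeriv.sum (fun v _ => hgd v (d v)) (fun v _ => hgbot v) (fun v _ => hgtop v)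
      fun v _ => hgdbot v (d v)
  have hT := hasDirDeriv_coe (φ := fun y : ι → ℝ => ∑ e ∈ E, w e * |y e.1 - y e.2|)
    (hasDerivWithinAt_tv E w x d)
  exact (hF.add hG (EReal.coe_ne_bot _) (EReal.coe_ne_top _) hGbot hGtop (EReal.coe_ne_bot _)
    hDbot).add hT (EReal.add_ne_bot_iff.2 ⟨EReal.coe_ne_bot _, hGbot⟩)
    (EReal.add_ne_top (EReal.coe_ne_top _) hGtop) (EReal.coe_ne_bot _) (EReal.coe_ne_top _)
    (EReal.add_ne_bot_iff.2 ⟨EReal.coe_ne_bot _, hDbot⟩) (EReal.coe_ne_bot _)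

theorem positivelyHomogeneous_objDirDeriv (hgd : ∀ v, PositivelyHomogeneous (gd v (x v))) :
    PositivelyHomogeneous (objDirDeriv E w f gd x) :=
  ((positivelyHomogeneous_coe fun c _ u => by rw [map_smul, smul_eq_mul]).add
    (PositivelyHomogeneous.sum univ fun v _ c hc u => hgd v c hc (u v))).add
    (positivelyHomogeneous_coe fun _ hc u => tvDirDeriv_smul E w x hc u)

theorem comonotoneAdditive_objDirDeriv (hgd : ∀ v, PositivelyHomogeneous (gd v (x v)))
    (hgd₀ : ∀ v, gd v (x v) 0 = 0) : ComonotoneAdditive (objDirDeriv E w f gd x) :=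
  ((comonotoneAdditive_coe fun u v _ => map_add _ u v).add
    (ComonotoneAdditive.sum univ fun i _ _ _ h => (hgd i).map_add_of_sameRay (hgd₀ i) (h.1 i))).add
    (comonotoneAdditive_coe fun _ _ h => tvDirDeriv_add E w x h)

end Objective

theorem stmt_14_general (E : Finset (V × V)) (w : V × V → ℝ)
    (f : (V → ℝ) → ℝ) (hf : Differentiable ℝ f)
    (g : V → ℝ → EReal) (hgbot : ∀ v y, g v y ≠ ⊥)
    (gd : V → ℝ → ℝ → EReal)
    (hgd : ∀ v y, g v y ≠ ⊤ → ∀ dir : ℝ,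
      HasDirDeriv (g v) y dir (gd v y dir) ∧ gd v y dir ≠ ⊥)
    (x : V → ℝ) (hx : objF E w f g x ≠ ⊤)
    (hdesc : ∃ d : V → ℝ, ∃ L : EReal,
      HasDirDeriv (objF E w f g) x d L ∧ L < 0) :
    ∃ U : Set V, ∃ s : ℝ, (s = -1 ∨ s = 1) ∧
      ∃ L : EReal,
        HasDirDeriv (objF E w f g) x (U.indicator fun _ => s) L ∧
        L < 0 := by
  obtain ⟨d, L, hL, hLneg⟩ := hdesc
  have hgtop := ne_top_of_objF_ne_top (fun v => hgbot v (x v)) hx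
  have hgdx v := hgd v (x v) (hgtop v)
  have hhom v : PositivelyHomogeneous (gd v (x v)) :=
    positivelyHomogeneous_of_hasDirDeriv fun dir => (hgdx v dir).1
  have hgd₀ v : gd v (x v) 0 = 0 :=
    (hgdx v 0).1.unique (hasDirDeriv_zero_dir (hgbot v (x v)) (hgtop v))
  set Φ := objDirDeriv E w f gd x
  have hΦ d : HasDirDeriv (objF E w f g) x d (Φ d) :=
    hasDirDeriv_objF (hf x) (fun v => hgbot v (x v)) hgtop (fun v dir => (hgdx v dir).1)
      (fun v dir => (hgdx v dir).2) d
  have hΦhom : PositivelyHomogeneous Φ := positivelyHomogeneous_objDirDeriv hhom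
  have hΦadd : ComonotoneAdditive Φ := comonotoneAdditive_objDirDeriv hhom hgd₀
  have hsplit : Φ d = Φ (fun v => max (d v) 0) + Φ (fun v => min (d v) 0) := by
    rw [← hΦadd _ _ (comonotone_max_min d)]
    exact congrArg Φ (funext fun v => ((max_add_min (d v) 0).trans (add_zero _)).symm)
  rw [hL.unique (hΦ d), hsplit] at hLneg
  rcases EReal.lt_zero_or_lt_zero_of_add_lt_zero hLneg with hpos | hneg
  · obtain ⟨U, hU⟩ := exists_indicator_lt_zero hΦhom hΦadd (fun v => le_max_right (d v) 0) hpos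
    exact ⟨U, 1, Or.inr rfl, _, hΦ _, hU⟩
  · obtain ⟨U, hU⟩ := exists_indicator_lt_zero hΦhom.comp_neg hΦadd.comp_neg
      (e := -fun v => min (d v) 0) (fun v => neg_nonneg.2 (min_le_right (d v) 0))
      (by rwa [neg_neg])
    refine ⟨U, -1, Or.inl rfl, _, hΦ _, ?_⟩
    rwa [show (U.indicator fun _ => (-1 : ℝ)) = -U.indicator 1 from Set.indicator_neg' U 1]

theorem stmt_14 (E : Finset (V × V)) (w : V × V → ℝ) (hw : ∀ e ∈ E, 0 ≤ w e)
    (f : (V → ℝ) → ℝ) (hf : Differentiable ℝ f)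
    (g : V → ℝ → EReal) (hgbot : ∀ v y, g v y ≠ ⊥)
    (gd : V → ℝ → ℝ → EReal)
    (hgd : ∀ v y, g v y ≠ ⊤ → ∀ dir : ℝ,
      HasDirDeriv (g v) y dir (gd v y dir) ∧ gd v y dir ≠ ⊥)
    (x : V → ℝ) (hx : objF E w f g x ≠ ⊤)
    (hdesc : ∃ d : V → ℝ, ∃ L : EReal,
      HasDirDeriv (objF E w f g) x d L ∧ L < 0) :
    ∃ U : Set V, ∃ s : ℝ, (s = -1 ∨ s = 1) ∧
      ∃ L : EReal,
        HasDirDeriv (objF E w f g) x (U.indicator fun _ => s) L ∧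
        L < 0 :=
  stmt_14_general E w f hf g hgbot gd hgd x hx hdesc
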